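/- Let 0 < ρ < R, λ > 0, and let Q : [ρ, R] → ℝ be a C² solution of Q'' + Q'/r − (λ + n²/r²)Q = 0 on (ρ, R) with Q(ρ) = −M'(ρ) > 0 and Q'(R) = −Q(R). Then Q(r) ≥ 0 on [ρ, R]. -/

import Mathlib

/-!
Minimum principle. Let `r₀` be a minimum point of `Q` on `[ρ, R]` and suppose `Q r₀ < 0`.
Then `r₀ ≠ ρ` because `Q ρ > 0`; `r₀ ≠ R` because a minimum at the right end forces
`Q'(R) ≤ 0`, while the Robin condition gives `Q'(R) = -Q(R) > 0`; and at an interior minimum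
`Q' = 0` and `Q'' ≥ 0`, so the equation gives `(λ + n²/r₀²) Q r₀ = Q'' r₀ ≥ 0`, contradicting
`Q r₀ < 0`.
-/

open Set Filter Topology

lemma IsMinOn.deriv_nonpos_of_Icc {f : ℝ → ℝ} {a b : ℝ} (hmin : IsMinOn f (Icc a b) b)
    (hab : a < b) : deriv f b ≤ 0 := by
  by_cases hf : DifferentiableAt ℝ f b
  swap
  · rw [deriv_zero_of_not_differentiableAt hf]
  have hslope : Tendsto (slope f b) (𝓝[<] b) (𝓝 (deriv f b)) :=
    (hasDerivWithinAt_iff_tendsto_slope' self_notMem_Iio).mp hf.hasDerivAt.hasDerivWithinAt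
  refine le_of_tendsto hslope ?_
  filter_upwards [Ioo_mem_nhdsLT hab] with r hr
  rw [slope_def_field]
  exact div_nonpos_of_nonneg_of_nonpos (sub_nonneg.2 (hmin ⟨hr.1.le, hr.2.le⟩))
    (sub_nonpos.2 hr.2.le)

lemma IsLocalMin.deriv_deriv_nonneg {f : ℝ → ℝ} {x : ℝ} (hmin : IsLocalMin f x)
    (hc : ContinuousAt f x) : 0 ≤ deriv (deriv f) x := by
  by_contra! hneg
  -- By the second-derivative test `x` would also be a local maximum, so `f` is locally constant.
  have hmax := isLocalMax_of_deriv_deriv_neg hneg hmin.deriv_eq_zero hc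
  have hconst : f =ᶠ[𝓝 x] fun _ ↦ f x :=
    (hmin.and hmax).mono fun y hy ↦ le_antisymm hy.2 hy.1
  have hderiv : deriv f =ᶠ[𝓝 x] fun _ ↦ 0 :=
    hconst.eventuallyEq_nhds.mono fun y hy ↦ hy.deriv_eq.trans (deriv_const y (f x))
  rw [hderiv.deriv_eq, deriv_const] at hneg
  exact hneg.false

theorem stmt9_general (ρ R lam : ℝ) (n : ℕ) (hρR : ρ < R) (hlam : 0 < lam)
    (M Q : ℝ → ℝ) (hQ : ContDiffOn ℝ 2 Q (Set.Icc ρ R))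
    (hode : ∀ r ∈ Set.Ioo ρ R,
      deriv (deriv Q) r + (1 / r) * deriv Q r - (lam + (n : ℝ) ^ 2 / r ^ 2) * Q r = 0)
    (hQρ : Q ρ = - deriv M ρ) (hMρ : deriv M ρ < 0)
    (hbR : deriv Q R = - Q R) :
    ∀ r ∈ Set.Icc ρ R, 0 ≤ Q r := by
  obtain ⟨r₀, hr₀, hmin⟩ :=
    isCompact_Icc.exists_isMinOn (nonempty_Icc.2 hρR.le) hQ.continuousOn
  suffices 0 ≤ Q r₀ from fun r hr ↦ this.trans (hmin hr)
  by_contra! hneg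
  have hρr₀ : ρ < r₀ := hr₀.1.lt_of_ne (by rintro rfl; linarith)
  rcases hr₀.2.eq_or_lt with rfl | hr₀R
  · linarith [hmin.deriv_nonpos_of_Icc hρR]
  have hnhds : Icc ρ R ∈ 𝓝 r₀ := Icc_mem_nhds hρr₀ hr₀R
  have hloc : IsLocalMin Q r₀ := hmin.isLocalMin hnhds
  have hQ'' := hloc.deriv_deriv_nonneg (hQ.continuousOn.continuousAt hnhds)
  have hcoef : 0 < lam + (n : ℝ) ^ 2 / r₀ ^ 2 := by positivity
  have hode₀ := hode r₀ ⟨hρr₀, hr₀R⟩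
  rw [hloc.deriv_eq_zero] at hode₀
  linarith [mul_neg_of_pos_of_neg hcoef hneg]

/-- positivity of the radial part `Q_n` of the first-order correction. -/
theorem stmt9 (ρ R lam : ℝ) (n : ℕ) (hρ : 0 < ρ) (hρR : ρ < R) (hlam : 0 < lam)
    (M Q : ℝ → ℝ) (hQ : ContDiffOn ℝ 2 Q (Set.Icc ρ R))
    (hode : ∀ r ∈ Set.Ioo ρ R,
      deriv (deriv Q) r + (1 / r) * deriv Q r - (lam + (n : ℝ) ^ 2 / r ^ 2) * Q r = 0)
    (hQρ : Q ρ = - deriv M ρ) (hMρ : deriv M ρ < 0)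
    (hbR : deriv Q R = - Q R) :
    ∀ r ∈ Set.Icc ρ R, 0 ≤ Q r :=
  stmt9_general ρ R lam n hρR hlam M Q hQ hode hQρ hMρ hbR
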